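/- Let E₁ = e₁ − c¹∂_φ, E₂ = e₂ − c²∂_φ, E₃ = K∂_φ be vector fields on ℝ³ where c¹, c², K depend only on (x¹,x²), K is nowhere zero, and [e₁,e₂] = c¹e₁ + c²e₂. If K = e₁c² − e₂c¹ − (c¹)² − (c²)², then the structure relations hold: [E₁,E₂] = c¹E₁ + c²E₂ − E₃, [E₁,E₃] = (e₁K/K)·E₃, and [E₂,E₃] = (e₂K/K)·E₃. -/

import Mathlib

lemma vert_deriv_zero {α : Type*} [NormedAddCommGroup α] [NormedSpace ℝ α]
    (f : (Fin 3 → ℝ) → α) (hf : Differentiable ℝ f)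
    (hx : ∀ p q, p 0 = q 0 → p 1 = q 1 → f p = f q) (p : Fin 3 → ℝ) :
    fderiv ℝ f p (Pi.single 2 1) = 0 := by
  set v : Fin 3 → ℝ := Pi.single 2 1 with hv
  have hγ : HasDerivAt (fun t : ℝ => p + t • v) ((1:ℝ) • v) 0 :=
    ((hasDerivAt_id 0).smul_const v).const_add p
  have h0 : p + (0:ℝ) • v = p := by simp
  have hcomp : HasDerivAt (fun t : ℝ => f (p + t • v)) (fderiv ℝ f p v) 0 := by
    have := (hf (p + (0:ℝ) • v)).hasFDerivAt.comp_hasDerivAt 0 hγ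
    rw [h0] at this
    simpa [Function.comp_def] using this
  have hconst : (fun t : ℝ => f (p + t • v)) = fun _ => f p := by
    funext t
    apply hx
    · simp [hv, Pi.single_eq_of_ne (by decide : (0:Fin 3) ≠ 2)]
    · simp [hv, Pi.single_eq_of_ne (by decide : (1:Fin 3) ≠ 2)]
  rw [hconst] at hcomp
  exact hcomp.unique (hasDerivAt_const 0 (f p))

/-- Lie bracket of vector fields on ℝ³: `[X,Y](p) = DY(p)·X(p) − DX(p)·Y(p)`. -/
noncomputable def lieBracket (X Y : (Fin 3 → ℝ) → (Fin 3 → ℝ)) :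
    (Fin 3 → ℝ) → (Fin 3 → ℝ) :=
  fun p => fderiv ℝ Y p (X p) - fderiv ℝ X p (Y p)

/-- The vertical coordinate vector field `∂_φ`. -/
def dphi : (Fin 3 → ℝ) → (Fin 3 → ℝ) := fun _ => Pi.single 2 1

theorem stmt_6 (e₁ e₂ : (Fin 3 → ℝ) → (Fin 3 → ℝ))
    (c1 c2 K : (Fin 3 → ℝ) → ℝ)
    (he₁ : ContDiff ℝ (⊤ : ℕ∞) e₁) (he₂ : ContDiff ℝ (⊤ : ℕ∞) e₂)
    (hc1 : ContDiff ℝ (⊤ : ℕ∞) c1) (hc2 : ContDiff ℝ (⊤ : ℕ∞) c2) (hK : ContDiff ℝ (⊤ : ℕ∞) K)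
    (hK0 : ∀ p, K p ≠ 0)
    -- e₁, e₂ have no ∂_φ component
    (he₁v : ∀ p, e₁ p 2 = 0) (he₂v : ∀ p, e₂ p 2 = 0)
    -- everything depends only on the x-variables
    (he₁x : ∀ p q, p 0 = q 0 → p 1 = q 1 → e₁ p = e₁ q)
    (he₂x : ∀ p q, p 0 = q 0 → p 1 = q 1 → e₂ p = e₂ q)
    (hc1x : ∀ p q, p 0 = q 0 → p 1 = q 1 → c1 p = c1 q)
    (hc2x : ∀ p q, p 0 = q 0 → p 1 = q 1 → c2 p = c2 q)
    (hKx : ∀ p q, p 0 = q 0 → p 1 = q 1 → K p = K q)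
    -- [e₁, e₂] = c¹ e₁ + c² e₂
    (hbr : ∀ p, lieBracket e₁ e₂ p = c1 p • e₁ p + c2 p • e₂ p)
    -- K = e₁c² − e₂c¹ − (c¹)² − (c²)²
    (hKdef : ∀ p, K p = fderiv ℝ c2 p (e₁ p) - fderiv ℝ c1 p (e₂ p)
        - (c1 p) ^ 2 - (c2 p) ^ 2) :
    -- E₁ = e₁ − c¹∂_φ, E₂ = e₂ − c²∂_φ, E₃ = K∂_φ
    (∀ p, lieBracket (fun q => e₁ q - c1 q • dphi q) (fun q => e₂ q - c2 q • dphi q) p =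
        c1 p • (e₁ p - c1 p • dphi p) + c2 p • (e₂ p - c2 p • dphi p)
          - K p • dphi p) ∧
    (∀ p, lieBracket (fun q => e₁ q - c1 q • dphi q) (fun q => K q • dphi q) p =
        (fderiv ℝ K p (e₁ p) / K p) • (K p • dphi p)) ∧
    (∀ p, lieBracket (fun q => e₂ q - c2 q • dphi q) (fun q => K q • dphi q) p =
        (fderiv ℝ K p (e₂ p) / K p) • (K p • dphi p)) := by
  set v : Fin 3 → ℝ := Pi.single 2 1 with hv
  have hd1 : Differentiable ℝ e₁ := he₁.differentiable (by simp)
  have hd2 : Differentiable ℝ e₂ := he₂.differentiable (by simp)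
  have hdc1 : Differentiable ℝ c1 := hc1.differentiable (by simp)
  have hdc2 : Differentiable ℝ c2 := hc2.differentiable (by simp)
  have hdK : Differentiable ℝ K := hK.differentiable (by simp)
  have hE1 : ∀ p, HasFDerivAt (fun q => e₁ q - c1 q • dphi q)
      (fderiv ℝ e₁ p - (fderiv ℝ c1 p).smulRight v) p := fun p =>
    (hd1 p).hasFDerivAt.sub ((hdc1 p).hasFDerivAt.smul_const v)
  have hE2 : ∀ p, HasFDerivAt (fun q => e₂ q - c2 q • dphi q)
      (fderiv ℝ e₂ p - (fderiv ℝ c2 p).smulRight v) p := fun p =>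
    (hd2 p).hasFDerivAt.sub ((hdc2 p).hasFDerivAt.smul_const v)
  have hE3 : ∀ p, HasFDerivAt (fun q => K q • dphi q)
      ((fderiv ℝ K p).smulRight v) p := fun p =>
    (hdK p).hasFDerivAt.smul_const v
  have z1 : ∀ p, fderiv ℝ e₁ p v = 0 := vert_deriv_zero e₁ hd1 he₁x
  have z2 : ∀ p, fderiv ℝ e₂ p v = 0 := vert_deriv_zero e₂ hd2 he₂x
  have zc1 : ∀ p, fderiv ℝ c1 p v = 0 := vert_deriv_zero c1 hdc1 hc1x
  have zc2 : ∀ p, fderiv ℝ c2 p v = 0 := vert_deriv_zero c2 hdc2 hc2x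
  have zK : ∀ p, fderiv ℝ K p v = 0 := vert_deriv_zero K hdK hKx
  refine ⟨fun p => ?_, fun p => ?_, fun p => ?_⟩
  · have hb := hbr p
    simp only [lieBracket] at hb ⊢
    rw [(hE1 p).fderiv, (hE2 p).fderiv]
    simp only [ContinuousLinearMap.sub_apply, ContinuousLinearMap.smulRight_apply,
      map_sub, map_smul, dphi]
    rw [← hv]
    simp only [z1 p, z2 p, zc1 p, zc2 p, zero_smul, smul_zero, sub_zero, mul_zero]
    have hKp := hKdef p
    linear_combination (norm := module) hb + hKp • v
  · simp only [lieBracket]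
    rw [(hE1 p).fderiv, (hE3 p).fderiv]
    simp only [ContinuousLinearMap.sub_apply, ContinuousLinearMap.smulRight_apply,
      map_sub, map_smul, dphi]
    rw [← hv]
    simp only [z1 p, zc1 p, zK p, zero_smul, smul_zero, sub_zero, mul_zero]
    rw [smul_smul, div_mul_cancel₀ _ (hK0 p)]
  · simp only [lieBracket]
    rw [(hE2 p).fderiv, (hE3 p).fderiv]
    simp only [ContinuousLinearMap.sub_apply, ContinuousLinearMap.smulRight_apply,
      map_sub, map_smul, dphi]
    rw [← hv]
    simp only [z2 p, zc2 p, zK p, zero_smul, smul_zero, sub_zero, mul_zero]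
    rw [smul_smul, div_mul_cancel₀ _ (hK0 p)]
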